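/- Let G be a graph and S ⊆ V(G) a cluster with Γ(S) its boundary. Suppose the set B_i := Γ(S) (of size w) is α-well-linked in G[S], let (X,Y) be a minimum 1/4-balanced cut of G[S] with respect to B_i with |X ∩ B_i| ≥ |Y ∩ B_i|, and let Z ⊆ X be the set of vertices incident on edges of E(X,Y). Then Z is 1-well-linked in G[X]. -/

import Mathlib

attribute [local instance] Classical.propDecidable

noncomputable section

variable {V : Type}

/-- The degree of a vertex `v` in the simple graph `G`. -/
def deg [Fintype V] (G : SimpleGraph V) (v : V) : ℕ :=
  (Finset.univ.filter (fun u => G.Adj v u)).card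

/-- The boundary `Γ(C)` of a cluster `C`: the vertices of `C` having a neighbor outside `C`. -/
def bdry (G : SimpleGraph V) (C : Finset V) : Finset V :=
  C.filter (fun v => ∃ u, u ∉ C ∧ G.Adj v u)

/-- The number of edges `|E(A,B)|` with one endpoint in `A` and the other in `B`
(for disjoint `A`, `B`). -/
def cutCard (G : SimpleGraph V) (A B : Finset V) : ℕ :=
  ((A ×ˢ B).filter (fun ab => G.Adj ab.1 ab.2)).card

/-- A flow in `G[C]` from `A` to `B`, in which every vertex of `A` sends exactly one
unit of flow, every vertex of `B` receives exactly one unit of flow, and the total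
flow through any edge is at most `η`. -/
def HasUnitFlowIn (G : SimpleGraph V) (C A B : Finset V) (η : ℝ) : Prop :=
  ∃ (P : Finset (Σ u v : V, G.Walk u v)) (f : (Σ u v : V, G.Walk u v) → ℝ),
    (∀ p ∈ P, 0 ≤ f p) ∧
    (∀ p ∈ P, p.1 ∈ A ∧ p.2.1 ∈ B) ∧
    (∀ p ∈ P, ∀ x ∈ p.2.2.support, x ∈ C) ∧
    (∀ a ∈ A, ∑ p ∈ P.filter (fun p => p.1 = a), f p = 1) ∧
    (∀ b ∈ B, ∑ p ∈ P.filter (fun p => p.2.1 = b), f p = 1) ∧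
    (∀ e : Sym2 V, ∑ p ∈ P.filter (fun p => e ∈ p.2.2.edges), f p ≤ η)

/-- `T` is `α`-well-linked in `G[C]`: every pair of disjoint equal-sized subsets of `T`
can be connected, one-to-one, by a flow of edge-congestion at most `1/α` inside `C`. -/
def WellLinkedIn (G : SimpleGraph V) (C T : Finset V) (α : ℝ) : Prop :=
  ∀ T' T'' : Finset V, T' ⊆ T → T'' ⊆ T → Disjoint T' T'' → T'.card = T''.card →
    HasUnitFlowIn G C T' T'' (1 / α)

/-- `T` is `(k',α)`-well-linked in `G[C]`. -/
def WellLinkedKIn (G : SimpleGraph V) (C T : Finset V) (k' : ℕ) (α : ℝ) : Prop :=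
  ∀ T' T'' : Finset V, T' ⊆ T → T'' ⊆ T → Disjoint T' T'' → T'.card = T''.card →
    T'.card ≤ k' → HasUnitFlowIn G C T' T'' (1 / α)

/-- `T` is `α`-well-linked in `G`. -/
def WellLinked [Fintype V] (G : SimpleGraph V) (T : Finset V) (α : ℝ) : Prop :=
  WellLinkedIn G Finset.univ T α

/-- There is a family of pairwise vertex-disjoint paths in `G`, one starting at each
vertex of `A`, each ending at a (necessarily distinct) vertex of `B`. -/
def NodeLinkedSets (G : SimpleGraph V) (A B : Finset V) : Prop :=
  ∃ P : Finset (Σ u v : V, G.Walk u v),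
    (∀ p ∈ P, p.2.2.IsPath ∧ p.1 ∈ A ∧ p.2.1 ∈ B) ∧
    (∀ a ∈ A, ∃ p ∈ P, p.1 = a) ∧
    (∀ p ∈ P, ∀ q ∈ P, p ≠ q → ∀ x ∈ p.2.2.support, x ∉ q.2.2.support)

/-- `T` is node-well-linked in `G`. -/
def NodeWellLinked (G : SimpleGraph V) (T : Finset V) : Prop :=
  ∀ T' T'' : Finset V, T' ⊆ T → T'' ⊆ T → Disjoint T' T'' → T'.card = T''.card →
    NodeLinkedSets G T' T''

/-- `(T₁, T₂)` are node-linked in `G`. -/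
def NodeLinked (G : SimpleGraph V) (T₁ T₂ : Finset V) : Prop :=
  ∀ T' T'' : Finset V, T' ⊆ T₁ → T'' ⊆ T₂ → T'.card = T''.card → NodeLinkedSets G T' T''

/-- `(A,B)` is a `ρ`-balanced cut of the cluster `C` with respect to the vertex set `Γ`. -/
def IsBalancedCut (Γ A B C : Finset V) (ρ : ℝ) : Prop :=
  A ∪ B = C ∧ Disjoint A B ∧
    ρ * (Γ.card : ℝ) ≤ ((A ∩ Γ).card : ℝ) ∧ ρ * (Γ.card : ℝ) ≤ ((B ∩ Γ).card : ℝ)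

open Finset SimpleGraph

/-!
Let `Z` be the set of vertices of `X` with a neighbour in `Y`, and let `J ⊆ X` hold at most half
of `X ∩ B` (otherwise swap `J` and `X \ J`). As `X` holds at least half of `B`, moving `J` over
to `Y` leaves a `1/4`-balanced cut, which trades the at least `|Z ∩ J|` edges of `E(J, Y)` for
those of `E(J, X \ J)`; so minimality gives `|E(J, X \ J)| ≥ |Z ∩ J|`. Thus `Z` satisfies the
cut condition for being `1`-well-linked in `G[X]`, and the edge version of Menger's theorem turns
it into a routing of congestion `1`: augmenting paths build an integral unit-capacity flow
between any two equal-sized subsets of `Z`, and peeling off paths along edges that carry flow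
decomposes it into edge-disjoint paths.
-/

section Walks

variable {G : SimpleGraph V}

def walkFlow {a b : V} (p : G.Walk a b) (u v : V) : ℤ :=
  ((p.darts.map Dart.toProd).count (u, v) : ℤ) - (p.darts.map Dart.toProd).count (v, u)

lemma walkFlow_skew {a b : V} (p : G.Walk a b) (u v : V) :
    walkFlow p u v = -walkFlow p v u := by
  simp only [walkFlow]; ring

lemma SimpleGraph.Walk.IsPath.count_toProd_le_one {a b : V} {p : G.Walk a b} (hp : p.IsPath)
    (x : V × V) : (p.darts.map Dart.toProd).count x ≤ 1 :=
  List.nodup_iff_count_le_one.mp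
    ((Walk.darts_nodup_of_support_nodup hp.support_nodup).map Dart.toProd_injective) x

lemma exists_dart_of_count_pos {a b u v : V} {p : G.Walk a b}
    (h : 0 < (p.darts.map Dart.toProd).count (u, v)) :
    ∃ d ∈ p.darts, d.fst = u ∧ d.snd = v := by
  obtain ⟨d, hd, hdp⟩ := List.mem_map.mp (List.count_pos_iff.mp h)
  exact ⟨d, hd, congrArg Prod.fst hdp, congrArg Prod.snd hdp⟩

lemma exists_isPath_of_reflTransGen {r : V → V → Prop} (hr : ∀ u v, r u v → G.Adj u v)
    {a b : V} (h : Relation.ReflTransGen r a b) :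
    ∃ p : G.Walk a b, p.IsPath ∧ ∀ d ∈ p.darts, r d.fst d.snd := by
  suffices ∃ p : G.Walk a b, ∀ d ∈ p.darts, r d.fst d.snd by
    obtain ⟨p, hp⟩ := this
    exact ⟨p.bypass, p.bypass_isPath, fun d hd => hp d (p.darts_bypass_subset_darts hd)⟩
  induction h with
  | refl => exact ⟨Walk.nil, by simp⟩
  | tail _ hbc ih =>
    obtain ⟨p, hp⟩ := ih
    refine ⟨p.concat (hr _ _ hbc), fun d hd => ?_⟩
    rw [Walk.darts_concat, List.concat_eq_append, List.mem_append, List.mem_singleton] at hd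
    rcases hd with hd | rfl
    · exact hp d hd
    · exact hbc

end Walks

section UnitFlows

variable {G : SimpleGraph V} {X A B : Finset V} {f : V → V → ℤ}

/-- `f u v` is the net flow from `u` to `v`; by skew-symmetry, `f u v ≤ 1` is the unit capacity
of the edge in both directions. -/
structure IsUnitFlow (G : SimpleGraph V) (X : Finset V) (f : V → V → ℤ) : Prop where
  skew : ∀ u v, f u v = -f v u
  le_one : ∀ u v, f u v ≤ 1
  adj_of_pos : ∀ u v, 0 < f u v → G.Adj u v ∧ u ∈ X ∧ v ∈ X

def Residual (G : SimpleGraph V) (X : Finset V) (f : V → V → ℤ) (u v : V) : Prop :=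
  G.Adj u v ∧ u ∈ X ∧ v ∈ X ∧ f u v < 1

lemma isUnitFlow_zero : IsUnitFlow G X 0 :=
  ⟨fun _ _ => by simp, fun _ _ => by simp, fun _ _ h => absurd h (lt_irrefl 0)⟩

lemma IsUnitFlow.eq_zero_of_not_adj (hf : IsUnitFlow G X f) {u v : V}
    (h : ¬(G.Adj u v ∧ u ∈ X ∧ v ∈ X)) : f u v = 0 := by
  have h₁ := mt (hf.adj_of_pos u v) h
  have h₂ := mt (hf.adj_of_pos v u) fun ⟨hadj, hv, hu⟩ => h ⟨hadj.symm, hu, hv⟩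
  have := hf.skew u v
  omega

lemma IsUnitFlow.add_walkFlow (hf : IsUnitFlow G X f) {a b : V} {p : G.Walk a b}
    (hp : p.IsPath) (hres : ∀ d ∈ p.darts, Residual G X f d.fst d.snd) :
    IsUnitFlow G X (f + walkFlow p) := by
  have hres' : ∀ u v, 0 < (p.darts.map Dart.toProd).count (u, v) → Residual G X f u v := by
    intro u v h
    obtain ⟨d, hd, rfl, rfl⟩ := exists_dart_of_count_pos h
    exact hres d hd
  refine ⟨fun u v => ?_, fun u v => ?_, fun u v h => ?_⟩
  · simp only [Pi.add_apply, hf.skew u v, walkFlow_skew p u v]; ring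
  · simp only [Pi.add_apply, walkFlow]
    have := hp.count_toProd_le_one (u, v)
    rcases Nat.eq_zero_or_pos ((p.darts.map Dart.toProd).count (u, v)) with h0 | hpos
    · have := hf.le_one u v
      rw [h0]; omega
    · have := (hres' u v hpos).2.2.2
      omega
  · simp only [Pi.add_apply, walkFlow] at h
    by_cases hpos : 0 < (p.darts.map Dart.toProd).count (u, v)
    · obtain ⟨hadj, hu, hv, -⟩ := hres' u v hpos
      exact ⟨hadj, hu, hv⟩
    · exact hf.adj_of_pos u v (by omega)

lemma IsUnitFlow.sub_walkFlow (hf : IsUnitFlow G X f) {a b : V} {p : G.Walk a b}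
    (hp : p.IsPath) (hpos : ∀ d ∈ p.darts, f d.fst d.snd = 1) :
    IsUnitFlow G X (f - walkFlow p) := by
  have hpos' : ∀ u v, 0 < (p.darts.map Dart.toProd).count (u, v) → f u v = 1 := by
    intro u v h
    obtain ⟨d, hd, rfl, rfl⟩ := exists_dart_of_count_pos h
    exact hpos d hd
  refine ⟨fun u v => ?_, fun u v => ?_, fun u v h => ?_⟩
  · simp only [Pi.sub_apply, hf.skew u v, walkFlow_skew p u v]; ring
  · simp only [Pi.sub_apply, walkFlow]
    have := hp.count_toProd_le_one (v, u)
    rcases Nat.eq_zero_or_pos ((p.darts.map Dart.toProd).count (v, u)) with h0 | hvu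
    · have := hf.le_one u v
      rw [h0]; omega
    · have := hf.skew u v
      have := hpos' v u hvu
      omega
  · simp only [Pi.sub_apply, walkFlow] at h
    by_cases hvu : 0 < (p.darts.map Dart.toProd).count (v, u)
    · obtain ⟨hadj, hv, hu⟩ := hf.adj_of_pos v u (by rw [hpos' v u hvu]; exact one_pos)
      exact ⟨hadj.symm, hu, hv⟩
    · exact hf.adj_of_pos u v (by omega)

lemma IsUnitFlow.sub_walkFlow_dart (hf : IsUnitFlow G X f) {a b : V} {p : G.Walk a b}
    (hp : p.IsPath) (hpos : ∀ d ∈ p.darts, f d.fst d.snd = 1) {d : G.Dart}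
    (hd : d ∈ p.darts) : (f - walkFlow p) d.fst d.snd = 0 := by
  have h1 : (p.darts.map Dart.toProd).count (d.fst, d.snd) = 1 :=
    le_antisymm (hp.count_toProd_le_one _) (List.count_pos_iff.mpr (List.mem_map_of_mem hd))
  have h2 : (p.darts.map Dart.toProd).count (d.snd, d.fst) = 0 := by
    by_contra hne
    obtain ⟨d', hd', h₁, h₂⟩ := exists_dart_of_count_pos (Nat.pos_of_ne_zero hne)
    have := hpos d' hd'
    rw [h₁, h₂, hf.skew, hpos d hd] at this
    norm_num at this
  simp only [Pi.sub_apply, walkFlow, h1, h2, hpos d hd]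
  norm_num

lemma IsUnitFlow.eq_one_of_sub_walkFlow_eq_one (hf : IsUnitFlow G X f) {a b : V}
    {p : G.Walk a b} (hp : p.IsPath) (hpos : ∀ d ∈ p.darts, f d.fst d.snd = 1) {u v : V}
    (h : (f - walkFlow p) u v = 1) : f u v = 1 := by
  simp only [Pi.sub_apply, walkFlow] at h
  have := hf.le_one u v
  have := hp.count_toProd_le_one (v, u)
  rcases Nat.eq_zero_or_pos ((p.darts.map Dart.toProd).count (v, u)) with h0 | hvu
  · rw [h0] at h; omega
  · obtain ⟨d, hd, hv, hu⟩ := exists_dart_of_count_pos hvu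
    have := hf.skew u v
    have := hpos d hd
    rw [hv, hu] at this
    omega

lemma IsUnitFlow.notMem_edges_of_sub_walkFlow (hf : IsUnitFlow G X f) {a b : V}
    {p : G.Walk a b} (hp : p.IsPath) (hpos : ∀ d ∈ p.darts, f d.fst d.snd = 1) {c c' : V}
    {q : G.Walk c c'} (hq : ∀ d ∈ q.darts, (f - walkFlow p) d.fst d.snd = 1) {e : Sym2 V}
    (he : e ∈ p.edges) : e ∉ q.edges := by
  intro he'
  obtain ⟨d, hd, rfl⟩ := List.mem_map.mp he
  obtain ⟨d', hd', hdd'⟩ := List.mem_map.mp he'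
  have h1 := hq d' hd'
  have h0 := hf.sub_walkFlow_dart hp hpos hd
  rcases (dart_edge_eq_iff d' d).mp hdd' with rfl | rfl
  · omega
  · rw [(hf.sub_walkFlow hp hpos).skew] at h1
    simp only [Dart.symm_toProd, Prod.fst_swap, Prod.snd_swap] at h1
    omega

lemma IsUnitFlow.support_subset (hf : IsUnitFlow G X f) {a b : V} (ha : a ∈ X)
    (p : G.Walk a b) (hpos : ∀ d ∈ p.darts, f d.fst d.snd = 1) :
    ∀ x ∈ p.support, x ∈ X := by
  intro x hx
  rw [← p.cons_map_snd_darts, List.mem_cons, List.mem_map] at hx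
  obtain rfl | ⟨d, hd, rfl⟩ := hx
  · exact ha
  · exact (hf.adj_of_pos _ _ (by rw [hpos d hd]; exact one_pos)).2.2

def demand (A B : Finset V) (v : V) : ℤ :=
  (if v ∈ A then 1 else 0) - (if v ∈ B then 1 else 0)

lemma sum_demand (J : Finset V) : ∑ v ∈ J, demand A B v = #(A ∩ J) - #(B ∩ J) := by
  simp only [demand, sum_sub_distrib, sum_boole, filter_mem_eq_inter, inter_comm J]

lemma demand_insert {a b : V} (ha : a ∉ A) (hb : b ∉ B) (v : V) :
    demand (insert a A) (insert b B) v
      = demand A B v + ((if v = a then 1 else 0) - (if v = b then 1 else 0)) := by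
  simp only [demand, mem_insert]
  by_cases hva : v = a <;> by_cases hvb : v = b <;> subst_vars <;> simp [*] <;> ring

end UnitFlows

section NetOut

variable [Fintype V] {G : SimpleGraph V}

def netOut (f : V → V → ℤ) (v : V) : ℤ := ∑ u, f v u

lemma netOut_add (f g : V → V → ℤ) (v : V) : netOut (f + g) v = netOut f v + netOut g v :=
  sum_add_distrib

lemma netOut_sub (f g : V → V → ℤ) (v : V) : netOut (f - g) v = netOut f v - netOut g v :=
  sum_sub_distrib _ _

lemma sum_count_prod_mk_eq_count_fst (L : List (V × V)) (v : V) :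
    ∑ u, (L.count (v, u) : ℤ) = (L.map Prod.fst).count v := by
  induction L with
  | nil => simp
  | cons x L ih =>
    obtain ⟨x₁, x₂⟩ := x
    simp only [List.count_cons, List.map_cons, Nat.cast_add, sum_add_distrib, ih,
      Prod.mk.injEq, beq_iff_eq]
    by_cases h : x₁ = v <;> simp [h]

lemma sum_count_prod_mk_eq_count_snd (L : List (V × V)) (v : V) :
    ∑ u, (L.count (u, v) : ℤ) = (L.map Prod.snd).count v := by
  calc ∑ u, (L.count (u, v) : ℤ) = ∑ u, ((L.map Prod.swap).count (v, u) : ℤ) := by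
        simp only [← List.count_map_of_injective L Prod.swap Prod.swap_injective,
          Prod.swap_prod_mk]
    _ = (L.map Prod.snd).count v := by
        rw [sum_count_prod_mk_eq_count_fst, List.map_map]; rfl

lemma netOut_walkFlow {a b : V} (p : G.Walk a b) (v : V) :
    netOut (walkFlow p) v = (if v = a then 1 else 0) - (if v = b then 1 else 0) := by
  simp only [netOut, walkFlow, sum_sub_distrib, sum_count_prod_mk_eq_count_fst,
    sum_count_prod_mk_eq_count_snd, List.map_map, Function.comp_def]
  have h1 := congrArg (List.count v) p.cons_map_snd_darts
  have h2 := congrArg (List.count v) p.map_fst_darts_append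
  simp only [List.count_cons, List.count_append, List.count_nil, beq_iff_eq,
    eq_comm (b := v)] at h1 h2
  split_ifs at h1 h2 ⊢ <;> omega

lemma sum_netOut_eq_sum_compl {f : V → V → ℤ} (hskew : ∀ u v, f u v = -f v u)
    (J : Finset V) : ∑ v ∈ J, netOut f v = ∑ v ∈ J, ∑ u ∈ Jᶜ, f v u := by
  have hinner : ∑ v ∈ J, ∑ u ∈ J, f v u = 0 := by
    have : ∑ v ∈ J, ∑ u ∈ J, f v u = -∑ v ∈ J, ∑ u ∈ J, f v u := by
      conv_lhs => rw [sum_comm]; enter [2, u, 2, v]; rw [hskew]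
      simp only [sum_neg_distrib]
    omega
  simp only [netOut, ← sum_add_sum_compl J, sum_add_distrib, hinner, zero_add]

end NetOut

section CutCard

variable {G : SimpleGraph V}

lemma cutCard_eq_sum (G : SimpleGraph V) (J K : Finset V) :
    cutCard G J K = ∑ v ∈ J, ∑ u ∈ K, if G.Adj v u then 1 else 0 := by
  rw [cutCard, card_filter, sum_product]

lemma cutCard_comm (A B : Finset V) : cutCard G A B = cutCard G B A := by
  rw [cutCard_eq_sum, cutCard_eq_sum, sum_comm]
  simp only [G.adj_comm]

lemma cutCard_union_left {A₁ A₂ : Finset V} (B : Finset V) (h : Disjoint A₁ A₂) :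
    cutCard G (A₁ ∪ A₂) B = cutCard G A₁ B + cutCard G A₂ B := by
  simp only [cutCard_eq_sum, sum_union h]

lemma cutCard_union_right (A : Finset V) {B₁ B₂ : Finset V} (h : Disjoint B₁ B₂) :
    cutCard G A (B₁ ∪ B₂) = cutCard G A B₁ + cutCard G A B₂ := by
  rw [cutCard_comm, cutCard_union_left A h, cutCard_comm B₁, cutCard_comm B₂]

lemma card_filter_exists_adj_le_cutCard (J Y : Finset V) :
    #(J.filter fun v => ∃ u ∈ Y, G.Adj v u) ≤ cutCard G J Y := by
  rw [card_filter, cutCard_eq_sum]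
  refine sum_le_sum fun v _ => ?_
  split_ifs with h
  · obtain ⟨u, hu, hadj⟩ := h
    exact (if_pos hadj).symm.le.trans
      (single_le_sum (f := fun u => if G.Adj v u then 1 else 0) (fun _ _ => Nat.zero_le _) hu)
  · exact Nat.zero_le _

/-- The cut form of `1`-well-linkedness of `Z` in `G[X]`. -/
def CutWellLinked (G : SimpleGraph V) (X Z : Finset V) : Prop :=
  ∀ J ⊆ X, min #(Z ∩ J) #(Z ∩ (X \ J)) ≤ cutCard G J (X \ J)

end CutCard

section Augmentation

variable [Fintype V] {G : SimpleGraph V} {X Z A B : Finset V} {f : V → V → ℤ}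

lemma IsUnitFlow.cutCard_eq_sum_netOut (hf : IsUnitFlow G X f) {J : Finset V} (hJX : J ⊆ X)
    (hJ : ∀ v ∈ J, ∀ u, Residual G X f v u → u ∈ J) :
    (cutCard G J (X \ J) : ℤ) = ∑ v ∈ J, netOut f v := by
  have hsat : ∀ v ∈ J, ∀ u ∉ J,
      f v u = if u ∈ X then (if G.Adj v u then 1 else 0) else 0 := by
    intro v hv u hu
    split_ifs with huX hadj
    · by_contra hne
      exact hu (hJ v hv u ⟨hadj, hJX hv, huX, lt_of_le_of_ne (hf.le_one v u) hne⟩)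
    · exact hf.eq_zero_of_not_adj fun h => hadj h.1
    · exact hf.eq_zero_of_not_adj fun h => huX h.2.2
  rw [sum_netOut_eq_sum_compl hf.skew, cutCard_eq_sum]
  push_cast
  refine sum_congr rfl fun v hv => ?_
  rw [sum_congr rfl fun u hu => hsat v hv u (mem_compl.mp hu), sum_ite_mem, inter_comm,
    ← sdiff_eq_inter_compl]

/-- If no vertex of `T \ B` is reachable from `a` in the residual graph, the reachable set `J`
is a cut saturated by `f`, so `|E(J, X \ J)| = |A ∩ J| - |B ∩ J|`; this is too small for the
cut condition, as `a ∈ Z ∩ J` and a vertex of `T \ B` lies in `Z ∩ (X \ J)`. -/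
lemma CutWellLinked.exists_residual_path (hcut : CutWellLinked G X Z) (hZX : Z ⊆ X)
    (hf : IsUnitFlow G X f) (hnet : ∀ v, netOut f v = demand A B v) (hAZ : A ⊆ Z)
    (hBZ : B ⊆ Z) (hAB : #A = #B) {a : V} (ha : a ∈ Z) (haA : a ∉ A) {T : Finset V}
    (hTZ : T ⊆ Z) (hTB : ¬T ⊆ B) :
    ∃ b ∈ T, b ∉ B ∧ ∃ p : G.Walk a b, p.IsPath ∧
      ∀ d ∈ p.darts, Residual G X f d.fst d.snd := by
  by_contra! hno
  set J := X.filter (Relation.ReflTransGen (Residual G X f) a)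
  have hJX : J ⊆ X := filter_subset _ _
  have hcutJ : (cutCard G J (X \ J) : ℤ) = #(A ∩ J) - #(B ∩ J) := by
    rw [hf.cutCard_eq_sum_netOut hJX fun v hv u huv =>
        mem_filter.mpr ⟨huv.2.2.1, (mem_filter.mp hv).2.tail huv⟩,
      sum_congr rfl fun v _ => hnet v, sum_demand]
  obtain ⟨b, hbT, hbB⟩ := not_subset.mp hTB
  have hbJ : b ∉ J := fun h =>
    have ⟨p, hp, hres⟩ := exists_isPath_of_reflTransGen (fun _ _ h => h.1) (mem_filter.mp h).2
    (hno b hbT hbB p hp).elim fun d hd => hd.2 (hres d hd.1)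
  have hAJ : #(A ∩ J) + 1 ≤ #(Z ∩ J) := by
    rw [← card_insert_of_notMem fun h => haA (mem_inter.mp h).1]
    exact card_le_card <| insert_subset (mem_inter.mpr ⟨ha, mem_filter.mpr ⟨hZX ha, .refl⟩⟩)
      (inter_subset_inter_right hAZ)
  have hBJ : #(B \ J) + 1 ≤ #(Z ∩ (X \ J)) := by
    rw [← card_insert_of_notMem fun h => hbB (mem_sdiff.mp h).1]
    refine card_le_card <| insert_subset
      (mem_inter.mpr ⟨hTZ hbT, mem_sdiff.mpr ⟨hZX (hTZ hbT), hbJ⟩⟩) fun v hv => ?_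
    obtain ⟨hvB, hvJ⟩ := mem_sdiff.mp hv
    exact mem_inter.mpr ⟨hBZ hvB, mem_sdiff.mpr ⟨hZX (hBZ hvB), hvJ⟩⟩
  have hB := card_inter_add_card_sdiff B J
  have hA := card_le_card (inter_subset_left : A ∩ J ⊆ A)
  have := hcut J hJX
  omega

lemma CutWellLinked.exists_isUnitFlow (hcut : CutWellLinked G X Z) (hZX : Z ⊆ X)
    {T₁ T₂ : Finset V} (hT₁ : T₁ ⊆ Z) (hT₂ : T₂ ⊆ Z) (hcard : #T₁ = #T₂) :
    ∃ f, IsUnitFlow G X f ∧ ∀ v, netOut f v = demand T₁ T₂ v := by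
  suffices ∀ k ≤ #T₁, ∃ A ⊆ T₁, ∃ B ⊆ T₂, #A = k ∧ #B = k ∧
      ∃ f, IsUnitFlow G X f ∧ ∀ v, netOut f v = demand A B v by
    obtain ⟨A, hA, B, hB, hAk, hBk, hflow⟩ := this #T₁ le_rfl
    rwa [eq_of_subset_of_card_le hA hAk.ge, eq_of_subset_of_card_le hB (by omega)] at hflow
  intro k hk
  induction k with
  | zero =>
    exact ⟨∅, empty_subset _, ∅, empty_subset _, rfl, rfl, 0, isUnitFlow_zero,
      fun v => by simp [netOut, demand]⟩
  | succ k ih =>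
    obtain ⟨A, hA, B, hB, hAk, hBk, f, hf, hnet⟩ := ih (by omega)
    obtain ⟨a, haT, haA⟩ := exists_mem_notMem_of_card_lt_card (by omega : #A < #T₁)
    obtain ⟨b, hbT, hbB, p, hp, hres⟩ := hcut.exists_residual_path hZX hf hnet (hA.trans hT₁)
      (hB.trans hT₂) (by omega) (hT₁ haT) haA hT₂ fun h => by have := card_le_card h; omega
    refine ⟨insert a A, insert_subset haT hA, insert b B, insert_subset hbT hB,
      by rw [card_insert_of_notMem haA, hAk], by rw [card_insert_of_notMem hbB, hBk],
      f + walkFlow p, hf.add_walkFlow hp hres, fun v => ?_⟩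
    rw [demand_insert haA hbB, netOut_add, hnet, netOut_walkFlow]

end Augmentation

section Linkage

variable {G : SimpleGraph V} {X A B : Finset V}

structure IsEdgeDisjointLinkage (G : SimpleGraph V) (X A B : Finset V)
    (P : Finset (Σ u v : V, G.Walk u v)) : Prop where
  mem_ends : ∀ p ∈ P, p.1 ∈ A ∧ p.2.1 ∈ B
  support_subset : ∀ p ∈ P, ∀ x ∈ p.2.2.support, x ∈ X
  card_start : ∀ a ∈ A, #(P.filter (·.1 = a)) = 1
  card_end : ∀ b ∈ B, #(P.filter (·.2.1 = b)) = 1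
  card_edge : ∀ e, #(P.filter (e ∈ ·.2.2.edges)) ≤ 1

lemma isEdgeDisjointLinkage_empty : IsEdgeDisjointLinkage G X ∅ ∅ ∅ :=
  ⟨by simp, by simp, by simp, by simp, by simp⟩

lemma IsEdgeDisjointLinkage.insert {P : Finset (Σ u v : V, G.Walk u v)}
    (hP : IsEdgeDisjointLinkage G X A B P) {a b : V} (ha : a ∉ A) (hb : b ∉ B)
    (p : G.Walk a b) (hpX : ∀ x ∈ p.support, x ∈ X)
    (hdisj : ∀ q ∈ P, ∀ e ∈ p.edges, e ∉ q.2.2.edges) :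
    IsEdgeDisjointLinkage G X (insert a A) (insert b B) (insert ⟨a, b, p⟩ P) := by
  have hnone : ∀ q ∈ P, q.1 ≠ a ∧ q.2.1 ≠ b := fun q hq =>
    ⟨fun h => ha (h ▸ (hP.mem_ends q hq).1), fun h => hb (h ▸ (hP.mem_ends q hq).2)⟩
  refine ⟨?_, ?_, fun a' ha' => ?_, fun b' hb' => ?_, fun e => ?_⟩
  · rintro q hq
    rcases mem_insert.mp hq with rfl | hq
    · exact ⟨mem_insert_self _ _, mem_insert_self _ _⟩
    · exact ⟨mem_insert_of_mem (hP.mem_ends q hq).1, mem_insert_of_mem (hP.mem_ends q hq).2⟩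
  · rintro q hq
    rcases mem_insert.mp hq with rfl | hq
    · exact hpX
    · exact hP.support_subset q hq
  · rw [filter_insert]
    rcases mem_insert.mp ha' with rfl | ha'
    · rw [if_pos rfl, filter_eq_empty_iff.mpr fun q hq => (hnone q hq).1]
      rfl
    · rw [if_neg fun h : a = a' => ha (h ▸ ha'), hP.card_start a' ha']
  · rw [filter_insert]
    rcases mem_insert.mp hb' with rfl | hb'
    · rw [if_pos rfl, filter_eq_empty_iff.mpr fun q hq => (hnone q hq).2]
      rfl
    · rw [if_neg fun h : b = b' => hb (h ▸ hb'), hP.card_end b' hb']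
  · rw [filter_insert]
    split_ifs with he
    · rw [filter_eq_empty_iff.mpr fun q hq => hdisj q hq e he]
      rfl
    · exact hP.card_edge e

lemma IsEdgeDisjointLinkage.hasUnitFlowIn {P : Finset (Σ u v : V, G.Walk u v)}
    (hP : IsEdgeDisjointLinkage G X A B P) : HasUnitFlowIn G X A B 1 := by
  refine ⟨P, fun _ => 1, fun _ _ => zero_le_one, hP.mem_ends, hP.support_subset,
    fun a ha => ?_, fun b hb => ?_, fun e => ?_⟩
  · simp [hP.card_start a ha]
  · simp [hP.card_end b hb]
  · simpa using hP.card_edge e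

variable [Fintype V] {f : V → V → ℤ}

/-- Otherwise the set `J` of vertices reachable from `a` along edges carrying flow would have
net outflow `≤ 0`, although it contains the source `a` and no sink. -/
lemma IsUnitFlow.exists_path_of_mem (hf : IsUnitFlow G X f)
    (hnet : ∀ v, netOut f v = demand A B v) {a : V} (ha : a ∈ A) :
    ∃ b ∈ B, ∃ p : G.Walk a b, p.IsPath ∧ ∀ d ∈ p.darts, f d.fst d.snd = 1 := by
  by_contra! hno
  have hr : ∀ u v, f u v = 1 → G.Adj u v := fun u v h => (hf.adj_of_pos u v (by omega)).1
  set J := univ.filter (Relation.ReflTransGen (fun u v => f u v = 1) a)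
  have hBJ : B ∩ J = ∅ := by
    refine eq_empty_of_forall_notMem fun b hb => ?_
    obtain ⟨p, hp, hpos⟩ :=
      exists_isPath_of_reflTransGen hr (mem_filter.mp (mem_inter.mp hb).2).2
    obtain ⟨d, hd, hne⟩ := hno b (mem_inter.mp hb).1 p hp
    exact hne (hpos d hd)
  have hout : ∑ v ∈ J, ∑ u ∈ Jᶜ, f v u ≤ 0 := by
    refine sum_nonpos fun v hv => sum_nonpos fun u hu => ?_
    by_contra! hpos
    have h1 : f v u = 1 := le_antisymm (hf.le_one v u) hpos
    exact mem_compl.mp hu (mem_filter.mpr ⟨mem_univ u, (mem_filter.mp hv).2.tail h1⟩)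
  have hAJ : 0 < #(A ∩ J) :=
    card_pos.mpr ⟨a, mem_inter.mpr ⟨ha, mem_filter.mpr ⟨mem_univ a, .refl⟩⟩⟩
  rw [← sum_netOut_eq_sum_compl hf.skew, sum_congr rfl fun v _ => hnet v, sum_demand, hBJ]
    at hout
  simp only [card_empty, CharP.cast_eq_zero, sub_zero] at hout
  omega

/-- The second conjunct is the induction invariant: the walks found after peeling off a path only
use darts that still carry flow, so they avoid the edges of that path. -/
lemma IsUnitFlow.exists_linkage (hf : IsUnitFlow G X f)
    (hnet : ∀ v, netOut f v = demand A B v) (hAX : A ⊆ X) (hcard : #A = #B) :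
    ∃ P : Finset (Σ u v : V, G.Walk u v), IsEdgeDisjointLinkage G X A B P ∧
      ∀ q ∈ P, ∀ d ∈ q.2.2.darts, f d.fst d.snd = 1 := by
  induction hn : #A generalizing A B f with
  | zero =>
    rw [Finset.card_eq_zero.mp hn, Finset.card_eq_zero.mp (hcard.symm.trans hn)]
    exact ⟨∅, isEdgeDisjointLinkage_empty, by simp⟩
  | succ n ih =>
    obtain ⟨a, ha⟩ := card_pos.mp (by omega : 0 < #A)
    obtain ⟨b, hb, p, hp, hpos⟩ := hf.exists_path_of_mem hnet ha
    have hnet' : ∀ v, netOut (f - walkFlow p) v = demand (A.erase a) (B.erase b) v := by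
      intro v
      have hdem : demand A B v = demand (A.erase a) (B.erase b) v
          + ((if v = a then 1 else 0) - (if v = b then 1 else 0)) := by
        conv_lhs => rw [← insert_erase ha, ← insert_erase hb]
        exact demand_insert (notMem_erase a A) (notMem_erase b B) v
      rw [netOut_sub, hnet, netOut_walkFlow, hdem]
      ring
    obtain ⟨P, hP, hPpos⟩ := ih (hf.sub_walkFlow hp hpos) hnet'
      ((erase_subset a A).trans hAX) (by rw [card_erase_of_mem ha, card_erase_of_mem hb, hcard])
      (by rw [card_erase_of_mem ha, hn]; rfl)
    have hP' := hP.insert (notMem_erase a A) (notMem_erase b B) p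
      (hf.support_subset (hAX ha) p hpos)
      fun q hq _ he => hf.notMem_edges_of_sub_walkFlow hp hpos (hPpos q hq) he
    rw [insert_erase ha, insert_erase hb] at hP'
    refine ⟨_, hP', fun q hq d hd => ?_⟩
    rcases mem_insert.mp hq with rfl | hq
    · exact hpos d hd
    · exact hf.eq_one_of_sub_walkFlow_eq_one hp hpos (hPpos q hq d hd)

end Linkage

theorem CutWellLinked.wellLinkedIn_one [Fintype V] {G : SimpleGraph V} {X Z : Finset V}
    (hcut : CutWellLinked G X Z) (hZX : Z ⊆ X) : WellLinkedIn G X Z 1 := by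
  intro T₁ T₂ hT₁ hT₂ _ hcard
  obtain ⟨f, hf, hnet⟩ := hcut.exists_isUnitFlow hZX hT₁ hT₂ hcard
  obtain ⟨P, hP, -⟩ := hf.exists_linkage hnet (hT₁.trans hZX) hcard
  simpa using hP.hasUnitFlowIn

section MinCut

variable {G : SimpleGraph V}

lemma card_union_inter {A B : Finset V} (Γ : Finset V) (h : Disjoint A B) :
    #((A ∪ B) ∩ Γ) = #(A ∩ Γ) + #(B ∩ Γ) := by
  rw [union_inter_distrib_right,
    card_union_of_disjoint (h.mono inter_subset_left inter_subset_left)]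

lemma bdry_subset (G : SimpleGraph V) (C : Finset V) : bdry G C ⊆ C := filter_subset _ _

def IsMinBalancedCut (G : SimpleGraph V) (Γ X Y C : Finset V) (ρ : ℝ) : Prop :=
  IsBalancedCut Γ X Y C ρ ∧
    ∀ X' Y', IsBalancedCut Γ X' Y' C ρ → cutCard G X Y ≤ cutCard G X' Y'

variable {Γ X Y C : Finset V} {ρ : ℝ}

/-- `(X \ J, Y ∪ J)` is again balanced, so minimality gives `|E(J, Y)| ≤ |E(J, X \ J)|`. -/
lemma IsMinBalancedCut.card_le_cutCard (hcut : IsMinBalancedCut G Γ X Y C ρ)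
    (hρ : ρ ≤ 1 / 4) (hΓ : Γ ⊆ C) (hXY : #(Y ∩ Γ) ≤ #(X ∩ Γ)) {J : Finset V}
    (hJX : J ⊆ X) (hJ : #(J ∩ Γ) ≤ #((X \ J) ∩ Γ)) :
    #(X.filter (fun v => ∃ u ∈ Y, G.Adj v u) ∩ J) ≤ cutCard G J (X \ J) := by
  obtain ⟨⟨hXYC, hdisj, -, hYΓ⟩, hmin⟩ := hcut
  have hJJ' : Disjoint J (X \ J) := disjoint_sdiff
  have hX : J ∪ (X \ J) = X := union_sdiff_of_subset hJX
  have hXΓ : #(X ∩ Γ) = #(J ∩ Γ) + #((X \ J) ∩ Γ) := by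
    rw [← card_union_inter Γ hJJ', hX]
  have hΓcard : #Γ = #(X ∩ Γ) + #(Y ∩ Γ) := by
    rw [← card_union_inter Γ hdisj, hXYC, inter_eq_right.mpr hΓ]
  have hbal : IsBalancedCut Γ (X \ J) (Y ∪ J) C ρ := by
    refine ⟨?_, disjoint_union_right.mpr ⟨hdisj.mono_left sdiff_subset, hJJ'.symm⟩, ?_, ?_⟩
    · rw [← hXYC, union_comm Y J, ← union_assoc, sdiff_union_of_subset hJX]
    · have : (#Γ : ℝ) ≤ 4 * #((X \ J) ∩ Γ) := by
        exact_mod_cast (by omega : #Γ ≤ 4 * #((X \ J) ∩ Γ))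
      nlinarith [Nat.cast_nonneg (α := ℝ) #Γ]
    · exact hYΓ.trans
        (by exact_mod_cast card_le_card (inter_subset_inter_right subset_union_left))
  have hle := hmin _ _ hbal
  rw [cutCard_union_right _ (hdisj.mono_left hJX).symm, cutCard_comm (X \ J) J] at hle
  have hsplit : cutCard G X Y = cutCard G J Y + cutCard G (X \ J) Y := by
    rw [← cutCard_union_left Y hJJ', hX]
  calc #(X.filter (fun v => ∃ u ∈ Y, G.Adj v u) ∩ J)
      ≤ #(J.filter fun v => ∃ u ∈ Y, G.Adj v u) :=
        card_le_card fun v hv => by simp_all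
    _ ≤ cutCard G J Y := card_filter_exists_adj_le_cutCard J Y
    _ ≤ cutCard G J (X \ J) := by omega

lemma IsMinBalancedCut.cutWellLinked (hcut : IsMinBalancedCut G Γ X Y C ρ) (hρ : ρ ≤ 1 / 4)
    (hΓ : Γ ⊆ C) (hXY : #(Y ∩ Γ) ≤ #(X ∩ Γ)) :
    CutWellLinked G X (X.filter fun v => ∃ u ∈ Y, G.Adj v u) := by
  intro J hJX
  rcases le_total #(J ∩ Γ) #((X \ J) ∩ Γ) with h | h
  · exact (min_le_left _ _).trans (hcut.card_le_cutCard hρ hΓ hXY hJX h)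
  · have := hcut.card_le_cutCard hρ hΓ hXY (J := X \ J) sdiff_subset
      (by rwa [Finset.sdiff_sdiff_eq_self hJX])
    rw [Finset.sdiff_sdiff_eq_self hJX, cutCard_comm] at this
    exact (min_le_right _ _).trans this

end MinCut

theorem stmt17_general [Fintype V] (G : SimpleGraph V) (S : Finset V)
    (X Y : Finset V)
    (hbal : IsBalancedCut (bdry G S) X Y S (1 / 4))
    (hmincut : ∀ X' Y' : Finset V, IsBalancedCut (bdry G S) X' Y' S (1 / 4) →
      cutCard G X Y ≤ cutCard G X' Y')
    (hXY : (Y ∩ bdry G S).card ≤ (X ∩ bdry G S).card) :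
    WellLinkedIn G X (X.filter (fun v => ∃ u ∈ Y, G.Adj v u)) 1 := by
  have hcut : IsMinBalancedCut G (bdry G S) X Y S (1 / 4) := ⟨hbal, hmincut⟩
  exact (hcut.cutWellLinked le_rfl (bdry_subset G S) hXY).wellLinkedIn_one (filter_subset _ _)

/-- Let `S` be a cluster whose boundary `B := Γ(S)` (of size `w`) is
`α`-well-linked in `G[S]`, let `(X,Y)` be a minimum `1/4`-balanced cut of `G[S]` with
respect to `B` with `|X ∩ B| ≥ |Y ∩ B|`, and let `Z ⊆ X` be the set of vertices of `X`
incident on the edges of `E(X,Y)`.  Then `Z` is `1`-well-linked in `G[X]`. -/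
theorem stmt17 [Fintype V] (G : SimpleGraph V) (S : Finset V) (w : ℕ)
    (hw : (bdry G S).card = w)
    (α : ℝ) (hα0 : 0 < α) (hα1 : α ≤ 1)
    (hwl : WellLinkedIn G S (bdry G S) α)
    (X Y : Finset V)
    (hbal : IsBalancedCut (bdry G S) X Y S (1 / 4))
    (hmincut : ∀ X' Y' : Finset V, IsBalancedCut (bdry G S) X' Y' S (1 / 4) →
      cutCard G X Y ≤ cutCard G X' Y')
    (hXY : (Y ∩ bdry G S).card ≤ (X ∩ bdry G S).card) :
    WellLinkedIn G X (X.filter (fun v => ∃ u ∈ Y, G.Adj v u)) 1 :=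
  stmt17_general G S X Y hbal hmincut hXY
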